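/- The quasi-center of a divisibility monoid is a free Abelian monoid, i.e., isomorphic to a direct product of finitely many copies of ℕ. -/

import Mathlib

/-- `LDvd b a` : `b` left-divides `a`, i.e. `a = b * d` for some `d`. -/
def LDvd {M : Type*} [Monoid M] (b a : M) : Prop := ∃ d, a = b * d

/-- `c` is a right lcm of `a` and `b`. -/
def IsRightLcm {M : Type*} [Monoid M] (a b c : M) : Prop :=
  LDvd a c ∧ LDvd b c ∧ ∀ m, LDvd a m → LDvd b m → LDvd c m

/-- `1` is the only invertible element. -/
def Conical (M : Type*) [Monoid M] : Prop := ∀ u : M, IsUnit u → u = 1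

/-- Left and right cancellativity. -/
def Cancellative (M : Type*) [Monoid M] : Prop :=
  (∀ a b c : M, a * b = a * c → b = c) ∧ (∀ a b c : M, b * a = c * a → b = c)

/-- `IsRes a b r` : `r` is the residue `a \ b`, i.e. `a * r` is the right lcm `a ∨ b`. -/
def IsRes {M : Type*} [Monoid M] (a b r : M) : Prop := IsRightLcm a b (a * r)

/-- The set of irreducible elements of `M`. -/
def Irr (M : Type*) [Monoid M] : Set M :=
  {a | a ≠ 1 ∧ ∀ b c : M, a = b * c → b = 1 ∨ c = 1}

/-- `a` is quasi-central: `aΣ = Σa` where `Σ` is the set of irreducible elements. -/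
def QuasiCentral {M : Type*} [Monoid M] (a : M) : Prop :=
  (fun x => a * x) '' Irr M = (fun x => x * a) '' Irr M

/-- `g` is a left gcd of `a` and `b`. -/
def IsLeftGcd {M : Type*} [Monoid M] (a b g : M) : Prop :=
  LDvd g a ∧ LDvd g b ∧ ∀ d, LDvd d a → LDvd d b → LDvd d g

/-- `j` is the join of `x` and `y` inside the lattice `↓(a)` of left divisors of `a`. -/
def IsJoinIn {M : Type*} [Monoid M] (a x y j : M) : Prop :=
  LDvd j a ∧ LDvd x j ∧ LDvd y j ∧ ∀ m, LDvd m a → LDvd x m → LDvd y m → LDvd j m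

/-- A (left) divisibility monoid : cancellative, finitely generated by its irreducible
elements, any two elements admit a left gcd, and every `↓(a)` is a finite distributive
lattice under left divisibility (meets are left gcds, joins exist, distributivity holds). -/
structure IsDivisibilityMonoid (M : Type*) [Monoid M] : Prop where
  mul_left_cancel : ∀ a b c : M, a * b = a * c → b = c
  mul_right_cancel : ∀ a b c : M, b * a = c * a → b = c
  irr_finite : (Irr M).Finite
  irr_gen : ∀ a : M, a ∈ Submonoid.closure (Irr M)
  exists_gcd : ∀ a b : M, ∃ g, IsLeftGcd a b g
  divisors_finite : ∀ a : M, {b : M | LDvd b a}.Finite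
  exists_join : ∀ a x y : M, LDvd x a → LDvd y a → ∃ j, IsJoinIn a x y j
  distrib : ∀ a x y z : M, LDvd x a → LDvd y a → LDvd z a →
    ∀ jyz g gxy gxz j', IsJoinIn a y z jyz → IsLeftGcd x jyz g →
      IsLeftGcd x y gxy → IsLeftGcd x z gxz → IsJoinIn a gxy gxz j' → g = j'

/-- `d` is the (right) local delta of `a`: the right lcm of the set `{b \ a : b ∈ M}`,
all of whose elements are required to exist. -/
def IsLocalDelta {M : Type*} [Monoid M] (a d : M) : Prop :=
  (∀ b : M, ∃ r, IsRes b a r) ∧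
  (∀ b r : M, IsRes b a r → LDvd r d) ∧
  ∀ m : M, (∀ b r : M, IsRes b a r → LDvd r m) → LDvd d m

/-- The quasi-center of `M`, as a submonoid. -/
def quasiCenter (M : Type*) [Monoid M] : Submonoid M where
  carrier := {a | QuasiCentral a}
  one_mem' := by
    show (fun x => (1 : M) * x) '' Irr M = (fun x => x * 1) '' Irr M
    simp
  mul_mem' := by
    intro a b ha hb
    have ha' : (fun x : M => a * x) '' Irr M = (fun x => x * a) '' Irr M := ha
    have hb' : (fun x : M => b * x) '' Irr M = (fun x => x * b) '' Irr M := hb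
    show (fun x : M => a * b * x) '' Irr M = (fun x => x * (a * b)) '' Irr M
    calc (fun x : M => a * b * x) '' Irr M
        = (fun x : M => a * x) '' ((fun x : M => b * x) '' Irr M) := by
          rw [Set.image_image]; simp [mul_assoc]
      _ = (fun x : M => a * x) '' ((fun x : M => x * b) '' Irr M) := by rw [hb']
      _ = (fun x : M => x * b) '' ((fun x : M => a * x) '' Irr M) := by
          rw [Set.image_image, Set.image_image]; simp [mul_assoc]
      _ = (fun x : M => x * b) '' ((fun x : M => x * a) '' Irr M) := by rw [ha']
      _ = (fun x : M => x * (a * b)) '' Irr M := by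
          rw [Set.image_image]; simp [mul_assoc]

/-! All factorizations of an element of a divisibility monoid into irreducibles have the same
length, because two distinct irreducibles `σ, τ` dividing `a` have a join `σ s = τ t ∣ a` with
`s, t` irreducible. This gives an additive length `|·|`. Since `x ↦ y` with `x a = a y` preserves
length, counting shows that `a` is quasi-central as soon as `M a ⊆ a M`; hence the quasi-center
`Q` is closed under left quotients and left gcds. Two quasi-central elements `a, b` commute:
after cancelling their gcd we may assume `a ∧ b = 1`, and then distributivity forces
`|a ∨ b| = |a| + |b|`, so `a ∨ b` equals both `a b` and `b a`. Thus `Q` is cancellative and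
commutative, with trivial units and gcds, so its irreducibles are prime; being pairwise coprime
they inject into the finite set of irreducibles of `M`, and `Q` is the free commutative monoid on
them. -/

section LengthFunction

variable {N : Type*} [Monoid N] {ℓ : N → ℕ}

theorem subsingleton_units_of_length (hmul : ∀ a b, ℓ (a * b) = ℓ a + ℓ b)
    (hzero : ∀ a, ℓ a = 0 → a = 1) : Subsingleton Nˣ := by
  have hone (w : Nˣ) : w = 1 := Units.ext <| hzero _ <| by
    have h := hmul w ↑w⁻¹
    have h₁ := hmul 1 1
    rw [Units.mul_inv] at h
    rw [mul_one] at h₁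
    omega
  exact ⟨fun u v => (hone u).trans (hone v).symm⟩

theorem closure_irreducible_eq_top_of_length (hmul : ∀ a b, ℓ (a * b) = ℓ a + ℓ b)
    (hzero : ∀ a, ℓ a = 0 → a = 1) : Submonoid.closure {p : N | Irreducible p} = ⊤ := by
  have := subsingleton_units_of_length hmul hzero
  refine (Submonoid.eq_top_iff' _).2 fun a => ?_
  induction hn : ℓ a using Nat.strong_induction_on generalizing a with
  | _ n ih =>
  rcases eq_or_ne a 1 with rfl | ha
  · exact Submonoid.one_mem _
  rcases irreducible_or_factor (show ¬IsUnit a by simpa using ha) with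
    hirr | ⟨b, c, hb, hc, rfl⟩
  · exact Submonoid.subset_closure hirr
  have hb0 : ℓ b ≠ 0 := fun h => hb (by simp [hzero b h])
  have hc0 : ℓ c ≠ 0 := fun h => hc (by simp [hzero c h])
  rw [hmul] at hn
  exact Submonoid.mul_mem _ (ih _ (by omega) b rfl) (ih _ (by omega) c rfl)

end LengthFunction

section FreeCommMonoid

variable {N : Type*} [CancelCommMonoid N] {ι : Type*} [Fintype ι]

def prodPowHom (p : ι → N) : Multiplicative (ι → ℕ) →* N where
  toFun k := ∏ i, p i ^ k.toAdd i
  map_one' := by simp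
  map_mul' k l := by simp [pow_add, Finset.prod_mul_distrib]

theorem prodPowHom_surjective {p : ι → N} (hgen : Submonoid.closure (Set.range p) = ⊤) :
    Function.Surjective (prodPowHom p) := by
  classical
  rw [← MonoidHom.mrange_eq_top, eq_top_iff, ← hgen, Submonoid.closure_le]
  rintro _ ⟨i, rfl⟩
  exact ⟨Multiplicative.ofAdd (Pi.single i 1), by simp [prodPowHom, Pi.single_apply]⟩

variable [Subsingleton Nˣ] {p : ι → N} (hp : ∀ i, Irreducible (p i))
  (hinj : Function.Injective p) (hprime : ∀ i a b, p i ∣ a * b → p i ∣ a ∨ p i ∣ b)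
include hp hinj hprime

theorem not_dvd_prod_pow_erase [DecidableEq ι] (i : ι) (k : ι → ℕ) :
    ¬p i ∣ ∏ j ∈ Finset.univ.erase i, p j ^ k j := by
  let S : Submonoid N :=
    { carrier := {x | ¬p i ∣ x}
      one_mem' := fun h => (hp i).not_isUnit (isUnit_of_dvd_one h)
      mul_mem' := fun ha hb h => (hprime i _ _ h).elim ha hb }
  refine S.prod_mem fun j hj => S.pow_mem (fun hij => ?_) _
  obtain ⟨c, hc⟩ := hij
  have hc1 : c = 1 := by
    simpa using ((hp j).isUnit_or_isUnit hc).resolve_left (hp i).not_isUnit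
  exact Finset.ne_of_mem_erase hj (hinj (by rw [hc, hc1, mul_one]))

theorem pow_dvd_prod_pow_iff [DecidableEq ι] (i : ι) (m : ℕ) (k : ι → ℕ) :
    p i ^ m ∣ ∏ j, p j ^ k j ↔ m ≤ k i := by
  refine ⟨fun h => ?_, fun h => (pow_dvd_pow _ h).trans (Finset.dvd_prod_of_mem _ (by simp))⟩
  by_contra! hlt
  rw [← Finset.mul_prod_erase _ _ (Finset.mem_univ i)] at h
  obtain ⟨c, hc⟩ := (pow_dvd_pow (p i) hlt).trans h
  rw [pow_succ, mul_assoc] at hc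
  exact not_dvd_prod_pow_erase hp hinj hprime i k ⟨c, mul_left_cancel hc⟩

theorem prodPowHom_injective : Function.Injective (prodPowHom p) := by
  classical
  intro k l h
  apply Multiplicative.toAdd.injective
  funext i
  refine eq_of_forall_le_iff fun m => ?_
  rw [← pow_dvd_prod_pow_iff hp hinj hprime, ← pow_dvd_prod_pow_iff hp hinj hprime]
  exact Iff.of_eq (congrArg _ h)

end FreeCommMonoid

theorem exists_mulEquiv_of_irreducible_prime {N : Type*} [CancelCommMonoid N]
    [Subsingleton Nˣ] [Finite {p : N // Irreducible p}]
    (hprime : ∀ p : N, Irreducible p → ∀ a b, p ∣ a * b → p ∣ a ∨ p ∣ b)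
    (hgen : Submonoid.closure {p : N | Irreducible p} = ⊤) :
    ∃ n : ℕ, Nonempty (N ≃* Multiplicative (Fin n → ℕ)) := by
  obtain ⟨n, ⟨e⟩⟩ := Finite.exists_equiv_fin {p : N // Irreducible p}
  set p : Fin n → N := fun i => e.symm i
  have hrange : Set.range p = {p : N | Irreducible p} := by
    rw [show p = Subtype.val ∘ e.symm from rfl, e.symm.surjective.range_comp,
      Subtype.range_coe_subtype]
  have hp : ∀ i, Irreducible (p i) := fun i => (e.symm i).2
  have hinj : Function.Injective p := Subtype.val_injective.comp e.symm.injective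
  refine ⟨n, ⟨(MulEquiv.ofBijective (prodPowHom p) ⟨?_, ?_⟩).symm⟩⟩
  · exact prodPowHom_injective hp hinj fun i => hprime _ (hp i)
  · exact prodPowHom_surjective (hrange ▸ hgen)

section GcdJoin

variable {M : Type*} [Monoid M]

theorem isLeftGcd_left_of_dvd {a b : M} (h : a ∣ b) : IsLeftGcd a b a :=
  ⟨dvd_refl a, h, fun _ hd _ => hd⟩

theorem isLeftGcd_right_of_dvd {a b : M} (h : b ∣ a) : IsLeftGcd a b b :=
  ⟨h, dvd_refl b, fun _ _ hd => hd⟩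

theorem isJoinIn_one_right {a x : M} (h : x ∣ a) : IsJoinIn a x 1 x :=
  ⟨h, dvd_refl x, one_dvd x, fun _ _ hx _ => hx⟩

theorem IsJoinIn.symm {a x y j : M} (h : IsJoinIn a x y j) : IsJoinIn a y x j :=
  ⟨h.1, h.2.2.1, h.2.1, fun m hm h₁ h₂ => h.2.2.2 m hm h₂ h₁⟩

theorem eq_one_or_eq_of_dvd_of_mem_irr {σ d : M} (hσ : σ ∈ Irr M) (h : d ∣ σ) :
    d = 1 ∨ d = σ := by
  obtain ⟨e, he⟩ := h
  refine (hσ.2 d e he).imp id fun h₁ => ?_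
  rw [he, h₁, mul_one]

end GcdJoin

noncomputable def wordLength {M : Type*} [Monoid M] (a : M) : ℕ :=
  sInf {n | ∃ l : List M, (∀ x ∈ l, x ∈ Irr M) ∧ l.prod = a ∧ l.length = n}

namespace IsDivisibilityMonoid

variable {M : Type*} [Monoid M] (hM : IsDivisibilityMonoid M)
include hM

protected theorem mul_left_cancel' {a b c : M} (h : a * b = a * c) : b = c :=
  hM.mul_left_cancel a b c h

protected theorem mul_right_cancel' {a b c : M} (h : b * a = c * a) : b = c :=
  hM.mul_right_cancel a b c h

theorem closure_irr_eq_top : Submonoid.closure (Irr M) = ⊤ :=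
  eq_top_iff.2 fun a _ => hM.irr_gen a

theorem eq_one_of_mul_eq_one {u v : M} (h : u * v = 1) : u = 1 := by
  have hu : u ∣ 1 := ⟨v, h.symm⟩
  have hjoin : IsJoinIn 1 1 1 u :=
    ⟨hu, one_dvd u, one_dvd u, fun m _ _ _ => ⟨v * m, by rw [← mul_assoc, h, one_mul]⟩⟩
  -- `u` and `1` divide each other, so `u` is both `1 ∨ 1` and `1 ∧ u` in `↓1`, and
  -- distributivity gives `u = (1 ∧ 1) ∨ (1 ∧ 1) = 1`
  exact hM.distrib 1 1 1 1 (dvd_refl 1) (dvd_refl 1) (dvd_refl 1) u u 1 1 1 hjoin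
    (isLeftGcd_right_of_dvd hu) (isLeftGcd_left_of_dvd (dvd_refl 1))
    (isLeftGcd_left_of_dvd (dvd_refl 1)) (isJoinIn_one_right (dvd_refl 1))

theorem eq_one_of_dvd_one {u : M} (h : u ∣ 1) : u = 1 :=
  h.elim fun _ hv => hM.eq_one_of_mul_eq_one hv.symm

theorem mem_irr_of_isJoinIn {σ τ a t : M} (hσ : σ ∈ Irr M) (hτ : τ ∈ Irr M) (hne : σ ≠ τ)
    (hj : IsJoinIn a σ τ (τ * t)) : t ∈ Irr M := by
  have cover : ∀ u, τ * u ∣ τ * t → u = 1 ∨ u = t := by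
    intro u hu
    have hua : τ * u ∣ a := hu.trans hj.1
    have hgcd_j : IsLeftGcd (τ * u) (τ * t) (τ * u) := isLeftGcd_left_of_dvd hu
    have hgcd_τ : IsLeftGcd (τ * u) τ τ := isLeftGcd_right_of_dvd (dvd_mul_right τ u)
    have hσa : σ ∣ a := dvd_trans hj.2.1 hj.1
    have hτa : τ ∣ a := dvd_trans hj.2.2.1 hj.1
    -- distributivity: `τu = τu ∧ (σ ∨ τ) = (τu ∧ σ) ∨ τ`, where `τu ∧ σ` is `σ` or `1`
    by_cases hσu : σ ∣ τ * u
    · right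
      exact hM.mul_left_cancel' (hM.distrib a _ σ τ hua hσa hτa _ _ σ τ _ hj hgcd_j
        (isLeftGcd_right_of_dvd hσu) hgcd_τ hj)
    · left
      have hgcd_σ : IsLeftGcd (τ * u) σ 1 := by
        refine ⟨one_dvd _, one_dvd σ, fun d hdu hdσ => ?_⟩
        rcases eq_one_or_eq_of_dvd_of_mem_irr hσ hdσ with rfl | rfl
        exacts [dvd_refl 1, absurd hdu hσu]
      have hjoin : IsJoinIn a 1 τ τ := (isJoinIn_one_right hτa).symm
      exact hM.mul_left_cancel' ((hM.distrib a _ σ τ hua hσa hτa _ _ 1 τ τ hj hgcd_j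
        hgcd_σ hgcd_τ hjoin).trans (mul_one τ).symm)
  refine ⟨fun ht => ?_, fun u v huv => ?_⟩
  · have hστ : σ ∣ τ := by
      have := hj.2.1
      rwa [ht, mul_one] at this
    exact (eq_one_or_eq_of_dvd_of_mem_irr hτ hστ).elim hσ.1 hne
  · refine (cover u ⟨v, by rw [huv, mul_assoc]⟩).imp id fun hut => ?_
    rw [hut] at huv
    exact hM.mul_left_cancel' (huv.symm.trans (mul_one t).symm)

theorem exists_mem_irr_mul_eq_mul {σ τ a : M} (hσ : σ ∈ Irr M) (hτ : τ ∈ Irr M) (hne : σ ≠ τ)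
    (hσa : σ ∣ a) (hτa : τ ∣ a) :
    ∃ s t, s ∈ Irr M ∧ t ∈ Irr M ∧ σ * s = τ * t ∧ σ * s ∣ a := by
  obtain ⟨j, hj⟩ := hM.exists_join a σ τ hσa hτa
  obtain ⟨s, rfl⟩ := hj.2.1
  obtain ⟨t, ht⟩ := hj.2.2.1
  exact ⟨s, t, hM.mem_irr_of_isJoinIn hτ hσ hne.symm hj.symm,
    hM.mem_irr_of_isJoinIn hσ hτ hne (ht ▸ hj), ht, hj.1⟩

theorem eq_nil_of_prod_eq_one {l : List M} (hl : ∀ x ∈ l, x ∈ Irr M) (h : l.prod = 1) :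
    l = [] := by
  cases l with
  | nil => rfl
  | cons σ r =>
    rw [List.prod_cons] at h
    exact absurd (hM.eq_one_of_mul_eq_one h) (hl σ List.mem_cons_self).1

theorem length_eq_of_prod_eq {l₁ l₂ : List M} (h₁ : ∀ x ∈ l₁, x ∈ Irr M)
    (h₂ : ∀ x ∈ l₂, x ∈ Irr M) (h : l₁.prod = l₂.prod) : l₁.length = l₂.length := by
  induction hn : l₁.length using Nat.strong_induction_on generalizing l₁ l₂ with
  | _ n ih =>
  subst hn
  match l₁, l₂ with
  | [], l₂ => rw [hM.eq_nil_of_prod_eq_one h₂ h.symm]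
  | l₁, [] => rw [hM.eq_nil_of_prod_eq_one h₁ h]
  | σ :: r₁, τ :: r₂ =>
    simp only [List.forall_mem_cons, List.prod_cons, List.length_cons] at h₁ h₂ h ⊢
    by_cases hστ : σ = τ
    · subst hστ
      rw [ih _ (by simp) h₁.2 h₂.2 (hM.mul_left_cancel' h) rfl]
    obtain ⟨s, t, hs, ht, hst, hsa⟩ :=
      hM.exists_mem_irr_mul_eq_mul h₁.1 h₂.1 hστ (dvd_mul_right σ _) ⟨_, h⟩
    obtain ⟨w, hw⟩ := hsa
    obtain ⟨lw, hlw, rfl⟩ := Submonoid.exists_list_of_mem_closure (hM.irr_gen w)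
    have hr₁ : r₁.prod = (s :: lw).prod :=
      hM.mul_left_cancel' (by rw [hw, List.prod_cons, mul_assoc])
    have hr₂ : r₂.prod = (t :: lw).prod :=
      hM.mul_left_cancel' (by rw [← h, hw, hst, List.prod_cons, mul_assoc])
    have hlen₁ := ih _ (by simp) h₁.2 (List.forall_mem_cons.2 ⟨hs, hlw⟩) hr₁ rfl
    have hlen₂ := ih _ (by simp only [List.length_cons] at hlen₁ ⊢; omega)
      (List.forall_mem_cons.2 ⟨ht, hlw⟩) h₂.2 hr₂.symm rfl
    simp only [List.length_cons] at hlen₁ hlen₂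
    omega

theorem wordLength_prod {l : List M} (hl : ∀ x ∈ l, x ∈ Irr M) :
    wordLength l.prod = l.length := by
  obtain ⟨l', hl', hprod, hlen⟩ := Nat.sInf_mem (⟨l.length, l, hl, rfl, rfl⟩ :
    {n | ∃ l' : List M, (∀ x ∈ l', x ∈ Irr M) ∧ l'.prod = l.prod ∧ l'.length = n}.Nonempty)
  rw [wordLength, ← hlen, hM.length_eq_of_prod_eq hl' hl hprod]

theorem wordLength_one : wordLength (1 : M) = 0 :=
  hM.wordLength_prod (l := []) (by simp)

theorem wordLength_mul (a b : M) : wordLength (a * b) = wordLength a + wordLength b := by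
  obtain ⟨la, hla, rfl⟩ := Submonoid.exists_list_of_mem_closure (hM.irr_gen a)
  obtain ⟨lb, hlb, rfl⟩ := Submonoid.exists_list_of_mem_closure (hM.irr_gen b)
  rw [← List.prod_append, hM.wordLength_prod hla, hM.wordLength_prod hlb,
    hM.wordLength_prod (fun x hx => (List.mem_append.1 hx).elim (hla x) (hlb x)),
    List.length_append]

theorem eq_one_of_wordLength_eq_zero {a : M} (h : wordLength a = 0) : a = 1 := by
  obtain ⟨l, hl, rfl⟩ := Submonoid.exists_list_of_mem_closure (hM.irr_gen a)
  rw [hM.wordLength_prod hl, List.length_eq_zero_iff] at h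
  rw [h, List.prod_nil]

theorem mem_irr_iff_wordLength_eq_one {a : M} : a ∈ Irr M ↔ wordLength a = 1 := by
  refine ⟨fun h => by simpa using hM.wordLength_prod (l := [a]) (by simpa using h), fun h => ?_⟩
  obtain ⟨l, hl, rfl⟩ := Submonoid.exists_list_of_mem_closure (hM.irr_gen a)
  rw [hM.wordLength_prod hl, List.length_eq_one_iff] at h
  obtain ⟨σ, rfl⟩ := h
  simpa using hl

theorem wordLength_le_of_dvd {a b : M} (h : a ∣ b) : wordLength a ≤ wordLength b := by
  obtain ⟨c, rfl⟩ := h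
  rw [hM.wordLength_mul]
  omega

theorem eq_of_dvd_of_wordLength_le {a b : M} (h : a ∣ b) (hl : wordLength b ≤ wordLength a) :
    a = b := by
  obtain ⟨c, rfl⟩ := h
  rw [hM.wordLength_mul] at hl
  rw [hM.eq_one_of_wordLength_eq_zero (by omega : wordLength c = 0), mul_one]

theorem finite_setOf_wordLength_eq (n : ℕ) : {a : M | wordLength a = n}.Finite := by
  have := hM.irr_finite.to_subtype
  refine ((List.finite_length_eq (Irr M) n).image fun l => (l.map Subtype.val).prod).subset ?_
  intro a ha
  obtain ⟨l, hl, rfl⟩ := Submonoid.exists_list_of_mem_closure (hM.irr_gen a)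
  refine ⟨l.attach.map fun x => ⟨x.1, hl x.1 x.2⟩, ?_, ?_⟩
  · simpa [hM.wordLength_prod hl] using ha
  · simp

theorem wordLength_eq_of_mul_eq {x y c : M} (h : x * c = c * y) :
    wordLength x = wordLength y := by
  have := congrArg wordLength h
  rw [hM.wordLength_mul, hM.wordLength_mul] at this
  omega

theorem exists_mul_eq_of_quasiCentral {a : M} (ha : QuasiCentral a) (x : M) :
    ∃ y, x * a = a * y := by
  refine Submonoid.closure_induction (motive := fun x _ => ∃ y, x * a = a * y)
    (fun σ hσ => ?_) ⟨1, by simp⟩ (fun x y _ _ ⟨y₁, h₁⟩ ⟨y₂, h₂⟩ => ⟨y₁ * y₂, ?_⟩)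
    (hM.irr_gen x)
  · obtain ⟨τ, -, hτ⟩ : σ * a ∈ (fun x => a * x) '' Irr M := ha ▸ ⟨σ, hσ, rfl⟩
    exact ⟨τ, hτ.symm⟩
  · rw [mul_assoc, h₂, ← mul_assoc, h₁, mul_assoc]

/-- The map `x ↦ y` with `x * c = c * y` is injective and preserves word length, so it
permutes each (finite) set of elements of a given length. -/
theorem exists_mul_eq_of_forall {c : M} (H : ∀ x, ∃ y, x * c = c * y) (y : M) :
    ∃ x, x * c = c * y := by
  choose f hf using H
  set S := {z : M | wordLength z = wordLength y}
  have hmaps : Set.MapsTo f S S := fun x hx =>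
    (hM.wordLength_eq_of_mul_eq (hf x)).symm.trans hx
  have hinj : Set.InjOn f S := fun x₁ _ x₂ _ h =>
    hM.mul_right_cancel' (by rw [hf, hf, h])
  obtain ⟨x, -, hx⟩ := (((hM.finite_setOf_wordLength_eq _).injOn_iff_bijOn_of_mapsTo
    hmaps).1 hinj).surjOn (show y ∈ S from rfl)
  exact ⟨x, by rw [hf, hx]⟩

theorem quasiCentral_of_forall {a : M} (H : ∀ x, ∃ y, x * a = a * y) : QuasiCentral a := by
  have hirr : ∀ {x y}, x * a = a * y → (x ∈ Irr M ↔ y ∈ Irr M) := fun h => by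
    rw [hM.mem_irr_iff_wordLength_eq_one, hM.mem_irr_iff_wordLength_eq_one,
      hM.wordLength_eq_of_mul_eq h]
  ext z
  constructor
  · rintro ⟨σ, hσ, rfl⟩
    obtain ⟨x, hx⟩ := hM.exists_mul_eq_of_forall H σ
    exact ⟨x, (hirr hx).2 hσ, hx⟩
  · rintro ⟨σ, hσ, rfl⟩
    obtain ⟨y, hy⟩ := H σ
    exact ⟨y, (hirr hy).1 hσ, hy.symm⟩

theorem quasiCentral_of_mul {a b : M} (ha : QuasiCentral a) (hab : QuasiCentral (a * b)) :
    QuasiCentral b := by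
  refine hM.quasiCentral_of_forall fun x => ?_
  obtain ⟨z, hz⟩ := hM.exists_mul_eq_of_forall (hM.exists_mul_eq_of_quasiCentral ha) x
  obtain ⟨w, hw⟩ := hM.exists_mul_eq_of_quasiCentral hab z
  exact ⟨w, hM.mul_left_cancel' (by rw [← mul_assoc, ← hz, mul_assoc, hw, mul_assoc])⟩

theorem dvd_of_mul_dvd_mul_left {x a b : M} (h : x * a ∣ x * b) : a ∣ b := by
  obtain ⟨c, hc⟩ := h
  exact ⟨c, hM.mul_left_cancel' (by rw [hc, mul_assoc])⟩

theorem isLeftGcd_mul_left (x : M) {a b g : M} (hg : IsLeftGcd a b g) :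
    IsLeftGcd (x * a) (x * b) (x * g) := by
  refine ⟨mul_dvd_mul_left x hg.1, mul_dvd_mul_left x hg.2.1, fun d hda hdb => ?_⟩
  obtain ⟨G, hG⟩ := hM.exists_gcd (x * a) (x * b)
  obtain ⟨h, rfl⟩ := hG.2.2 x (dvd_mul_right x a) (dvd_mul_right x b)
  exact dvd_trans (hG.2.2 d hda hdb) (mul_dvd_mul_left x
    (hg.2.2 h (hM.dvd_of_mul_dvd_mul_left hG.1) (hM.dvd_of_mul_dvd_mul_left hG.2.1)))

theorem dvd_of_isJoinIn {m a b j m' : M} (hj : IsJoinIn m a b j) (ha : a ∣ m')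
    (hb : b ∣ m') : j ∣ m' := by
  obtain ⟨G, hG⟩ := hM.exists_gcd m m'
  exact dvd_trans (hj.2.2.2 G hG.1 (hG.2.2 a (dvd_trans hj.2.1 hj.1) ha)
    (hG.2.2 b (dvd_trans hj.2.2.1 hj.1) hb)) hG.2.1

theorem quasiCentral_of_isLeftGcd {a b g : M} (ha : QuasiCentral a) (hb : QuasiCentral b)
    (hg : IsLeftGcd a b g) : QuasiCentral g := by
  refine hM.quasiCentral_of_forall fun x => ?_
  obtain ⟨a', ha'⟩ := hM.exists_mul_eq_of_quasiCentral ha x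
  obtain ⟨b', hb'⟩ := hM.exists_mul_eq_of_quasiCentral hb x
  exact (hM.isLeftGcd_mul_left x hg).2.2 g (ha' ▸ dvd_mul_of_dvd_left hg.1 a')
    (hb' ▸ dvd_mul_of_dvd_left hg.2.1 b')

theorem wordLength_add_le_of_isJoinIn {m x y j : M} (hg : IsLeftGcd x y 1)
    (hj : IsJoinIn m x y j) : wordLength x + wordLength y ≤ wordLength j := by
  induction x using Submonoid.induction_of_closure_eq_top_right hM.closure_irr_eq_top
    generalizing j with
  | one => simpa [hM.wordLength_one] using hM.wordLength_le_of_dvd hj.2.2.1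
  | mul_right x σ hσ ih =>
    have hxσm : x * σ ∣ m := dvd_trans hj.2.1 hj.1
    have hxm : x ∣ m := dvd_trans (dvd_mul_right x σ) hxσm
    have hym : y ∣ m := dvd_trans hj.2.2.1 hj.1
    have hg' : IsLeftGcd x y 1 :=
      ⟨one_dvd x, one_dvd y, fun d hdx hdy => hg.2.2 d (dvd_mul_of_dvd_left hdx σ) hdy⟩
    obtain ⟨j', hj'⟩ := hM.exists_join m x y hxm hym
    obtain ⟨d, rfl⟩ : j' ∣ j :=
      hj'.2.2.2 j hj.1 (dvd_trans (dvd_mul_right x σ) hj.2.1) hj.2.2.1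
    have hd : d ≠ 1 := by
      rintro rfl
      rw [mul_one] at hj
      -- distributivity: `xσ ∧ (x ∨ y) = (xσ ∧ x) ∨ (xσ ∧ y) = x ∨ 1 = x`
      have h := hM.distrib m (x * σ) x y hxσm hxm hym j' (x * σ) x 1 x hj'
        (isLeftGcd_left_of_dvd hj.2.1) (isLeftGcd_right_of_dvd (dvd_mul_right x σ)) hg
        (isJoinIn_one_right hxm)
      exact hσ.1 (hM.mul_left_cancel' (h.trans (mul_one x).symm))
    have hd0 : wordLength d ≠ 0 := fun h => hd (hM.eq_one_of_wordLength_eq_zero h)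
    have := ih hg' hj'
    rw [hM.wordLength_mul, hM.wordLength_mul, (hM.mem_irr_iff_wordLength_eq_one).1 hσ]
    omega

/-- Both `a * b` and `b * a` are the join `a ∨ b`: since `a ∧ b = 1`, the join is as long as
`a * b`. -/
theorem mul_comm_of_isLeftGcd_one {a b : M} (ha : QuasiCentral a) (hb : QuasiCentral b)
    (hg : IsLeftGcd a b 1) : a * b = b * a := by
  obtain ⟨a', ha'⟩ := hM.exists_mul_eq_of_quasiCentral ha b
  obtain ⟨b', hb'⟩ := hM.exists_mul_eq_of_quasiCentral hb a
  obtain ⟨j, hj⟩ := hM.exists_join (a * b) a b (dvd_mul_right a b) ⟨b', hb'⟩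
  have hlen := hM.wordLength_add_le_of_isJoinIn hg hj
  have hab : j = a * b := hM.eq_of_dvd_of_wordLength_le hj.1 (by rwa [hM.wordLength_mul])
  have hba : j = b * a := hM.eq_of_dvd_of_wordLength_le
    (hM.dvd_of_isJoinIn hj ⟨a', ha'⟩ (dvd_mul_right b a)) (by rw [hM.wordLength_mul]; omega)
  rw [← hab, hba]

theorem mul_comm_of_quasiCentral {a b : M} (ha : QuasiCentral a) (hb : QuasiCentral b) :
    a * b = b * a := by
  induction hn : wordLength a + wordLength b using Nat.strong_induction_on
    generalizing a b with
  | _ n ih =>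
  obtain ⟨g, hg⟩ := hM.exists_gcd a b
  rcases eq_or_ne g 1 with rfl | hg1
  · exact hM.mul_comm_of_isLeftGcd_one ha hb hg
  have hgq := hM.quasiCentral_of_isLeftGcd ha hb hg
  obtain ⟨a₁, rfl⟩ := hg.1
  obtain ⟨b₁, rfl⟩ := hg.2.1
  have ha₁ := hM.quasiCentral_of_mul hgq ha
  have hb₁ := hM.quasiCentral_of_mul hgq hb
  have hlg : wordLength g ≠ 0 := fun h => hg1 (hM.eq_one_of_wordLength_eq_zero h)
  rw [hM.wordLength_mul, hM.wordLength_mul] at hn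
  have c₁ : g * a₁ = a₁ * g := ih _ (by omega) hgq ha₁ rfl
  have c₂ : a₁ * b₁ = b₁ * a₁ := ih _ (by omega) ha₁ hb₁ rfl
  have c₃ : g * b₁ = b₁ * g := ih _ (by omega) hgq hb₁ rfl
  calc g * a₁ * (g * b₁) = g * (a₁ * g) * b₁ := by simp only [mul_assoc]
    _ = g * g * (b₁ * a₁) := by rw [← c₁, ← c₂]; simp only [mul_assoc]
    _ = g * (g * b₁) * a₁ := by simp only [mul_assoc]
    _ = g * (b₁ * g) * a₁ := by rw [c₃]
    _ = g * b₁ * (g * a₁) := by simp only [mul_assoc]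

theorem exists_mem_irr_dvd {a : M} (ha : a ≠ 1) : ∃ σ ∈ Irr M, σ ∣ a := by
  obtain ⟨l, hl, rfl⟩ := Submonoid.exists_list_of_mem_closure (hM.irr_gen a)
  cases l with
  | nil => exact absurd List.prod_nil ha
  | cons σ r => exact ⟨σ, hl σ List.mem_cons_self, ⟨r.prod, List.prod_cons⟩⟩

abbrev quasiCenterCancelCommMonoid : CancelCommMonoid (quasiCenter M) :=
  { (quasiCenter M).toMonoid with
    mul_comm := fun a b => Subtype.ext (hM.mul_comm_of_quasiCentral a.2 b.2)
    mul_left_cancel := fun _ _ _ h =>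
      Subtype.ext (hM.mul_left_cancel' (congrArg Subtype.val h)) }

theorem subsingleton_units_quasiCenter : Subsingleton (quasiCenter M)ˣ :=
  subsingleton_units_of_length (ℓ := fun a : quasiCenter M => wordLength (a : M))
    (fun a b => hM.wordLength_mul a b)
    (fun _ h => Subtype.ext (hM.eq_one_of_wordLength_eq_zero h))

theorem closure_irreducible_quasiCenter :
    Submonoid.closure {p : quasiCenter M | Irreducible p} = ⊤ :=
  closure_irreducible_eq_top_of_length (ℓ := fun a : quasiCenter M => wordLength (a : M))
    (fun a b => hM.wordLength_mul a b)
    (fun _ h => Subtype.ext (hM.eq_one_of_wordLength_eq_zero h))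

theorem coe_dvd_coe_iff {a b : quasiCenter M} : (a : M) ∣ b ↔ a ∣ b :=
  ⟨fun ⟨c, hc⟩ => ⟨⟨c, hM.quasiCentral_of_mul a.2 (hc ▸ b.2)⟩, Subtype.ext hc⟩,
    map_dvd (quasiCenter M).subtype⟩

theorem exists_isLeftGcd_quasiCenter (a b : quasiCenter M) :
    ∃ g : quasiCenter M, IsLeftGcd (a : M) b g :=
  let ⟨g, hg⟩ := hM.exists_gcd a b
  ⟨⟨g, hM.quasiCentral_of_isLeftGcd a.2 b.2 hg⟩, hg⟩

theorem eq_one_or_eq_of_dvd_irreducible {p g : quasiCenter M} (hp : Irreducible p)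
    (h : (g : M) ∣ p) : g = 1 ∨ g = p := by
  have := hM.subsingleton_units_quasiCenter
  obtain ⟨c, rfl⟩ := hM.coe_dvd_coe_iff.1 h
  exact hp.eq_one_or_eq_one.imp id fun hc => by rw [hc, mul_one]

theorem dvd_or_dvd_of_irreducible {p a b : quasiCenter M} (hp : Irreducible p)
    (h : p ∣ a * b) : p ∣ a ∨ p ∣ b := by
  refine or_iff_not_imp_left.2 fun hpa => ?_
  obtain ⟨g, hg⟩ := hM.exists_isLeftGcd_quasiCenter p a
  obtain rfl : g = 1 := (hM.eq_one_or_eq_of_dvd_irreducible hp hg.1).resolve_right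
    (by rintro rfl; exact hpa (hM.coe_dvd_coe_iff.1 hg.2.1))
  -- `p ∧ a = 1`, so `b = b p ∧ b a`, and `p` divides both
  have hb := hM.isLeftGcd_mul_left b hg
  rw [OneMemClass.coe_one, mul_one, ← hM.mul_comm_of_quasiCentral a.2 b.2] at hb
  exact hM.coe_dvd_coe_iff.1 (hb.2.2 p ⟨b, hM.mul_comm_of_quasiCentral b.2 p.2⟩
    (hM.coe_dvd_coe_iff.2 h))

theorem finite_irreducible_quasiCenter : Finite {p : quasiCenter M // Irreducible p} := by
  have := hM.irr_finite.to_subtype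
  have hex (p : {p : quasiCenter M // Irreducible p}) : ∃ σ ∈ Irr M, σ ∣ (p : M) :=
    hM.exists_mem_irr_dvd fun h => p.2.ne_one (Subtype.ext h)
  choose σ hσ hσp using hex
  -- distinct irreducibles of the quasi-center have left gcd `1`, so no common `σ`
  refine Finite.of_injective (fun p => (⟨σ p, hσ p⟩ : Irr M)) fun p q hpq => ?_
  obtain ⟨g, hg⟩ := hM.exists_isLeftGcd_quasiCenter p q
  have hg1 : g ≠ 1 := by
    rintro rfl
    have hσq : σ p ∣ (q : M) := by
      rw [show σ p = σ q from congrArg Subtype.val hpq]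
      exact hσp q
    exact (hσ p).1 (hM.eq_one_of_dvd_one (hg.2.2 _ (hσp p) hσq))
  have hgp := (hM.eq_one_or_eq_of_dvd_irreducible p.2 hg.1).resolve_left hg1
  have hgq := (hM.eq_one_or_eq_of_dvd_irreducible q.2 hg.2.1).resolve_left hg1
  exact Subtype.ext (hgp.symm.trans hgq)

end IsDivisibilityMonoid

theorem stmt19 {M : Type*} [Monoid M] (hM : IsDivisibilityMonoid M) :
    ∃ n : ℕ, Nonempty (quasiCenter M ≃* Multiplicative (Fin n → ℕ)) := by
  let := hM.quasiCenterCancelCommMonoid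
  have := hM.subsingleton_units_quasiCenter
  have := hM.finite_irreducible_quasiCenter
  exact exists_mulEquiv_of_irreducible_prime (fun _ hp _ _ => hM.dvd_or_dvd_of_irreducible hp)
    hM.closure_irreducible_quasiCenter
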